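/- arXiv:1102.3893 — 4 statements merged into one kernel-verified Lean document; each statement's English description precedes it below -/
import Mathlib

section
/- Let V be a 4-dimensional real inner product space, R a symmetric bilinear form on V (the Ricci tensor), S its trace (scalar curvature), and v a nonzero vector in V. Define the (0,3)-tensor B(a,b,c) = -(1/2)(R(a,c)⟨b,v⟩ - R(a,b)⟨c,v⟩) - (1/6)(R(b,v)⟨a,c⟩ - R(c,v)⟨a,b⟩) + (S/6)(⟨b,v⟩⟨a,c⟩ - ⟨c,v⟩⟨a,b⟩). If B = 0, then v is an eigenvector of the self-adjoint operator associated to R. -/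
open scoped RealInnerProductSpace

/-- If the Cao–Chen tensor B built from a symmetric bilinear form
(given via its self-adjoint operator `Ric`) and a nonzero vector `v` on ℝ⁴
vanishes, then `v` is an eigenvector of `Ric`. -/
theorem stmt0
    (Ric : EuclideanSpace ℝ (Fin 4) →ₗ[ℝ] EuclideanSpace ℝ (Fin 4))
    (hsym : ∀ x y : EuclideanSpace ℝ (Fin 4), ⟪Ric x, y⟫ = ⟪x, Ric y⟫)
    (v : EuclideanSpace ℝ (Fin 4)) (hv : v ≠ 0)
    (S : ℝ) (hS : S = LinearMap.trace ℝ (EuclideanSpace ℝ (Fin 4)) Ric)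
    (hB : ∀ a b c : EuclideanSpace ℝ (Fin 4),
      -(1/2) * (⟪Ric a, c⟫ * ⟪b, v⟫ - ⟪Ric a, b⟫ * ⟪c, v⟫)
      - (1/6) * (⟪Ric b, v⟫ * ⟪a, c⟫ - ⟪Ric c, v⟫ * ⟪a, b⟫)
      + (S/6) * (⟪b, v⟫ * ⟪a, c⟫ - ⟪c, v⟫ * ⟪a, b⟫) = 0) :
    ∃ η : ℝ, Ric v = η • v := by
  have hn0 : (⟪v, v⟫ : ℝ) ≠ 0 := fun h => hv (inner_self_eq_zero.mp h)
  set η : ℝ := ⟪Ric v, v⟫ / ⟪v, v⟫ with hη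
  refine ⟨η, ?_⟩
  have key : ∀ c : EuclideanSpace ℝ (Fin 4), ⟪Ric v - η • v, c⟫ = 0 := by
    intro c
    have h := hB v v c
    have h1 : ⟪Ric c, v⟫ = ⟪Ric v, c⟫ := by
      rw [hsym c v, real_inner_comm]
    have h2 : ⟪v, c⟫ = ⟪c, v⟫ := real_inner_comm c v
    rw [h1, h2] at h
    have hk : ⟪Ric v, c⟫ * ⟪v, v⟫ = ⟪Ric v, v⟫ * ⟪c, v⟫ := by nlinarith [h]
    rw [inner_sub_left, real_inner_smul_left, hη, sub_eq_zero,
      div_mul_eq_mul_div, eq_div_iff hn0, h2]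
    linarith [hk]
  have h0 : Ric v - η • v = 0 := by
    have := key (Ric v - η • v)
    exact inner_self_eq_zero.mp this
  linear_combination (norm := module) h0
end

section
/- Let V be a 4-dimensional real inner product space, R a symmetric bilinear form on V with associated self-adjoint operator Ric, S = trace(Ric), and v a nonzero vector. If the tensor B(a,b,c) = -(1/2)(R(a,c)⟨b,v⟩ - R(a,b)⟨c,v⟩) - (1/6)(R(b,v)⟨a,c⟩ - R(c,v)⟨a,b⟩) + (S/6)(⟨b,v⟩⟨a,c⟩ - ⟨c,v⟩⟨a,b⟩) vanishes identically, then Ric has at most two distinct eigenvalues; moreover if it has exactly two distinct eigenvalues η₁, η₂, then η₁ has multiplicity 1 with eigenvector v/|v|, and η₂ has multiplicity 3. -/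
open scoped RealInnerProductSpace

/-- If the Cao–Chen tensor B vanishes, then the self-adjoint
operator `Ric` on ℝ⁴ has at most two distinct eigenvalues η₁, η₂, with `v` an
eigenvector for η₁ and `v ⊥` contained in the η₂-eigenspace; if η₁ ≠ η₂ then
the eigenvalue η₁ has multiplicity 1 (eigenvector v/|v|) and η₂ multiplicity 3. -/
theorem stmt1
    (Ric : EuclideanSpace ℝ (Fin 4) →ₗ[ℝ] EuclideanSpace ℝ (Fin 4))
    (hsym : ∀ x y : EuclideanSpace ℝ (Fin 4), ⟪Ric x, y⟫ = ⟪x, Ric y⟫)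
    (v : EuclideanSpace ℝ (Fin 4)) (hv : v ≠ 0)
    (S : ℝ) (hS : S = LinearMap.trace ℝ (EuclideanSpace ℝ (Fin 4)) Ric)
    (hB : ∀ a b c : EuclideanSpace ℝ (Fin 4),
      -(1/2) * (⟪Ric a, c⟫ * ⟪b, v⟫ - ⟪Ric a, b⟫ * ⟪c, v⟫)
      - (1/6) * (⟪Ric b, v⟫ * ⟪a, c⟫ - ⟪Ric c, v⟫ * ⟪a, b⟫)
      + (S/6) * (⟪b, v⟫ * ⟪a, c⟫ - ⟪c, v⟫ * ⟪a, b⟫) = 0) :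
    ∃ η₁ η₂ : ℝ,
      Ric ((‖v‖)⁻¹ • v) = η₁ • ((‖v‖)⁻¹ • v) ∧
      (∀ w : EuclideanSpace ℝ (Fin 4), ⟪w, v⟫ = 0 → Ric w = η₂ • w) ∧
      (∀ μ : ℝ, Module.End.HasEigenvalue Ric μ → μ = η₁ ∨ μ = η₂) ∧
      (η₁ ≠ η₂ →
        Module.finrank ℝ (Module.End.eigenspace Ric η₁) = 1 ∧
        Module.finrank ℝ (Module.End.eigenspace Ric η₂) = 3) := by
  set n : ℝ := ⟪v, v⟫ with hn
  have hn0 : n ≠ 0 := inner_self_ne_zero.mpr hv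
  -- Step 1: ⟪Ric v, b⟫ = 0 for b ⊥ v
  have key1 : ∀ b : EuclideanSpace ℝ (Fin 4), ⟪b, v⟫ = 0 → ⟪Ric v, b⟫ = 0 := by
    intro b hb
    have h := hB v b v
    have h2 : ⟪Ric b, v⟫ = ⟪Ric v, b⟫ := by rw [hsym, real_inner_comm]
    have h3 : ⟪v, b⟫ = (0:ℝ) := by rw [real_inner_comm]; exact hb
    rw [hb, h2, h3, ← hn] at h
    have h4 : ⟪Ric v, b⟫ * n = 0 := by linarith
    exact (mul_eq_zero.mp h4).resolve_right hn0
  set η₁ : ℝ := ⟪Ric v, v⟫ / n with hη₁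
  have hvv : Ric v = η₁ • v := by
    have hx : ⟪Ric v - η₁ • v, v⟫ = 0 := by
      rw [inner_sub_left, real_inner_smul_left, hη₁, div_mul_cancel₀ _ hn0]
      ring
    have hxx : ⟪Ric v - η₁ • v, Ric v - η₁ • v⟫ = (0:ℝ) := by
      rw [inner_sub_right, real_inner_smul_right, hx,
        real_inner_comm (Ric v), key1 _ hx]
      ring
    exact sub_eq_zero.mp (inner_self_eq_zero.mp hxx)
  have hRvv : ⟪Ric v, v⟫ = η₁ * n := by
    rw [hvv, real_inner_smul_left, hn]
  set η₂ : ℝ := (S - η₁) / 3 with hη₂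
  -- Step 2
  have key2 : ∀ w : EuclideanSpace ℝ (Fin 4), ⟪w, v⟫ = 0 → ∀ a : EuclideanSpace ℝ (Fin 4), ⟪a, Ric w⟫ = η₂ * ⟪a, w⟫ := by
    intro w hw a
    have h := hB a w v
    have hwr : ⟪Ric w, v⟫ = 0 := by
      rw [hsym, hvv, real_inner_smul_right, hw]; ring
    have haw : ⟪a, w⟫ = ⟪Ric a, w⟫ ∨ True := Or.inr trivial
    rw [hw, hwr, hRvv, ← hn] at h
    have h5 : ⟪Ric a, w⟫ * n = η₂ * ⟪a, w⟫ * n := by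
      rw [hη₂]; linear_combination 2 * h
    have h6 : ⟪Ric a, w⟫ = η₂ * ⟪a, w⟫ := by
      have := mul_right_cancel₀ hn0 h5
      exact this
    rw [← hsym]; exact h6
  have key2' : ∀ w : EuclideanSpace ℝ (Fin 4), ⟪w, v⟫ = 0 → Ric w = η₂ • w := by
    intro w hw
    have hxx : ⟪Ric w - η₂ • w, Ric w - η₂ • w⟫ = (0:ℝ) := by
      rw [inner_sub_right, key2 _ hw, real_inner_smul_right]
      ring
    exact sub_eq_zero.mp (inner_self_eq_zero.mp hxx)
  refine ⟨η₁, η₂, ?_, key2', ?_, ?_⟩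
  · rw [map_smul, hvv, smul_comm]
  · -- eigenvalues
    intro μ hμ
    obtain ⟨u, hu⟩ := hμ.exists_hasEigenvector
    have hu0 : u ≠ 0 := hu.right
    have huE : Ric u = μ • u := Module.End.mem_eigenspace_iff.mp hu.left
    set α : ℝ := ⟪u, v⟫ with hα
    set w : EuclideanSpace ℝ (Fin 4) := u - (α / n) • v with hwdef
    have hwv : ⟪w, v⟫ = 0 := by
      rw [hwdef, inner_sub_left, real_inner_smul_left, ← hn, ← hα,
        div_mul_cancel₀ _ hn0]; ring
    have hRw : Ric w = η₂ • w := key2' w hwv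
    have hRu : Ric u = η₂ • w + ((α / n) * η₁) • v := by
      have : u = w + (α / n) • v := by rw [hwdef]; abel
      rw [this, map_add, map_smul, hvv, hRw, smul_smul]
    have heq : μ • u = η₂ • w + ((α / n) * η₁) • v := by rw [← huE, hRu]
    by_cases hα0 : α = 0
    · right
      have hwu : w = u := by rw [hwdef, hα0]; simp
      have hww : ⟪w, w⟫ ≠ (0 : ℝ) := by
        rw [hwu]; exact inner_self_ne_zero.mpr hu0
      have h1 : μ * ⟪u, w⟫ = η₂ * ⟪w, w⟫ + ((α / n) * η₁) * ⟪v, w⟫ := by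
        have t := congrArg (fun x : EuclideanSpace ℝ (Fin 4) => ⟪x, w⟫) heq
        simpa only [inner_add_left, real_inner_smul_left] using t
      have hvw : ⟪v, w⟫ = (0:ℝ) := by rw [real_inner_comm]; exact hwv
      rw [hvw, hwu] at h1
      have h7 : (μ - η₂) * ⟪u, u⟫ = 0 := by linear_combination h1
      rcases mul_eq_zero.mp h7 with h | h
      · linarith [h]
      · exact absurd h (hwu ▸ hww)
    · left
      have h1 : μ * α = η₁ * α := by
        have t := congrArg (fun x : EuclideanSpace ℝ (Fin 4) => ⟪x, v⟫) heq
        simp only [inner_add_left, real_inner_smul_left] at t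
        rw [hwv, ← hn, ← hα] at t
        have t2 : ((α / n) * η₁) * n = η₁ * α := by field_simp
        linarith [t, t2]
      have h8 : (μ - η₁) * α = 0 := by linear_combination h1
      rcases mul_eq_zero.mp h8 with h | h
      · linarith
      · exact absurd h hα0
  · intro hne
    have e1 : Module.End.eigenspace Ric η₁ = Submodule.span ℝ {v} := by
      ext u
      rw [Module.End.mem_eigenspace_iff, Submodule.mem_span_singleton]
      constructor
      · intro h
        set α : ℝ := ⟪u, v⟫ with hα
        set w : EuclideanSpace ℝ (Fin 4) := u - (α / n) • v with hwdef
        have hwv : ⟪w, v⟫ = 0 := by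
          rw [hwdef, inner_sub_left, real_inner_smul_left, ← hn, ← hα,
            div_mul_cancel₀ _ hn0]; ring
        have hRw : Ric w = η₂ • w := key2' w hwv
        have hRw2 : Ric w = η₁ • w := by
          rw [hwdef, map_sub, map_smul, hvv, h, smul_sub, smul_comm]
        have hw0 : w = 0 := by
          have : (η₂ - η₁) • w = 0 := by rw [sub_smul, ← hRw, ← hRw2, sub_self]
          rcases smul_eq_zero.mp this with h' | h'
          · exact absurd (by linarith [sub_eq_zero.mp h']) hne
          · exact h'
        refine ⟨α / n, ?_⟩
        have : u = w + (α / n) • v := by rw [hwdef]; abel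
        rw [this, hw0, zero_add]
      · rintro ⟨c, rfl⟩
        rw [map_smul, hvv, smul_comm]
    have e2 : Module.End.eigenspace Ric η₂ = (Submodule.span ℝ {v})ᗮ := by
      ext u
      rw [Module.End.mem_eigenspace_iff, Submodule.mem_orthogonal_singleton_iff_inner_right]
      constructor
      · intro h
        have h1 : η₂ * ⟪u, v⟫ = η₁ * ⟪u, v⟫ := by
          have h2 : ⟪Ric u, v⟫ = η₂ * ⟪u, v⟫ := by
            rw [h, real_inner_smul_left]
          have h3 : ⟪Ric u, v⟫ = η₁ * ⟪u, v⟫ := by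
            rw [hsym, hvv, real_inner_smul_right]
          linarith
        have h9 : (η₂ - η₁) * ⟪u, v⟫ = 0 := by linear_combination h1
        rcases mul_eq_zero.mp h9 with h' | h'
        · exact absurd (by linarith) hne
        · rw [real_inner_comm]; exact h'
      · intro h
        exact key2' u (by rw [real_inner_comm]; exact h)
    constructor
    · rw [e1]; exact finrank_span_singleton hv
    · rw [e2]
      have h4 := Submodule.finrank_add_finrank_orthogonal (𝕜 := ℝ) (Submodule.span ℝ {v})
      have h5 : Module.finrank ℝ (Submodule.span ℝ {v}) = 1 := finrank_span_singleton hv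
      have h6 : Module.finrank ℝ (EuclideanSpace ℝ (Fin 4)) = 4 := finrank_euclideanSpace_fin
      omega
end

section
/- Let V be a 4-dimensional real inner product space and v ∈ V a unit vector. Suppose W is an algebraic Weyl tensor on V (an algebraic curvature tensor that is totally trace-free) satisfying: (i) W^+ = 0 (the self-dual part of W, viewed as an operator on Λ²V, vanishes), and (ii) W(a,b,c,v) = 0 for all a,b,c ∈ V. Then W = 0. -/
open Finset

/-- The Levi-Civita symbol on `Fin 4` (components of the volume form of ℝ⁴ in
the standard oriented orthonormal basis). -/
noncomputable def leviCivita4 (a b c d : Fin 4) : ℝ :=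
  ∑ σ : Equiv.Perm (Fin 4),
    if σ 0 = a ∧ σ 1 = b ∧ σ 2 = c ∧ σ 3 = d
    then ((Equiv.Perm.sign σ : ℤ) : ℝ) else 0

/-- Explicit integer formula for the Levi-Civita symbol. -/
def epsZ (a b c d : Fin 4) : ℤ :=
  (((b:ℤ)-(a:ℤ))*((c:ℤ)-(a:ℤ))*((d:ℤ)-(a:ℤ))*((c:ℤ)-(b:ℤ))*((d:ℤ)-(b:ℤ))*((d:ℤ)-(c:ℤ)))/12

set_option maxRecDepth 10000 in
lemma epsZ_spec : ∀ a b c d : Fin 4,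
    (∑ σ : Equiv.Perm (Fin 4),
      if σ 0 = a ∧ σ 1 = b ∧ σ 2 = c ∧ σ 3 = d
      then ((Equiv.Perm.sign σ : ℤ)) else 0) = epsZ a b c d := by decide

lemma leviCivita4_eq (a b c d : Fin 4) :
    leviCivita4 a b c d = (epsZ a b c d : ℝ) := by
  rw [leviCivita4, ← epsZ_spec a b c d, Int.cast_sum]
  exact Finset.sum_congr rfl fun σ _ => by split <;> simp

/-- if an algebraic Weyl tensor `W` on oriented ℝ⁴ has vanishing
self-dual part (equivalently `W + *W = 0`, where `(*W)_{abcd} =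
(1/2) ε_{abef} W_{efcd}`, since `W` commutes with the Hodge star) and
`W(a,b,c,v) = 0` for all `a,b,c` and a unit vector `v`, then `W = 0`.
`W` is written in components with respect to the standard oriented orthonormal
basis. -/
theorem stmt9
    (W : Fin 4 → Fin 4 → Fin 4 → Fin 4 → ℝ)
    (hanti1 : ∀ a b c d, W a b c d = - W b a c d)
    (hanti2 : ∀ a b c d, W a b c d = - W a b d c)
    (hpair : ∀ a b c d, W a b c d = W c d a b)
    (hbianchi : ∀ a b c d, W a b c d + W b c a d + W c a b d = 0)
    (htracefree : ∀ a c, ∑ b, W a b c b = 0)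
    (v : Fin 4 → ℝ) (hv : ∑ i, v i * v i = 1)
    -- (i) the self-dual part of W vanishes: W + *W = 0
    (hplus : ∀ a b c d,
      W a b c d + (1/2) * ∑ e, ∑ f, leviCivita4 a b e f * W e f c d = 0)
    -- (ii) contraction of W with v vanishes
    (hWv : ∀ a b c, ∑ d, W a b c d * v d = 0) :
    ∀ a b c d, W a b c d = 0 := by
  have hv' : v 0 * v 0 + v 1 * v 1 + v 2 * v 2 + v 3 * v 3 = 1 := by
    simpa [Fin.sum_univ_four] using hv
  -- contraction on the first index also vanishes
  have h1 : ∀ b c d, ∑ a, v a * W a b c d = 0 := by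
    intro b c d
    have h2 := hWv c d b
    have e : ∀ a, v a * W a b c d = -(W c d b a * v a) := by
      intro a; rw [hpair a b c d, hanti2 c d a b]; ring
    simp only [e, Finset.sum_neg_distrib, h2, neg_zero]
  have key : ∀ c d, W 0 1 c d = 0 ∧ W 0 2 c d = 0 ∧ W 0 3 c d = 0 ∧
      W 1 2 c d = 0 ∧ W 1 3 c d = 0 ∧ W 2 3 c d = 0 := by
    intro c d
    have E0 := h1 0 c d; have E1 := h1 1 c d
    have E2 := h1 2 c d; have E3 := h1 3 c d
    simp only [Fin.sum_univ_four] at E0 E1 E2 E3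
    have P1 := hplus 0 1 c d; have P2 := hplus 0 2 c d; have P3 := hplus 0 3 c d
    simp only [Fin.sum_univ_four, leviCivita4_eq] at P1 P2 P3
    norm_num [epsZ, show ((0:Fin 4):ℤ) = 0 from rfl, show ((1:Fin 4):ℤ) = 1 from rfl,
      show ((2:Fin 4):ℤ) = 2 from rfl, show ((3:Fin 4):ℤ) = 3 from rfl] at P1 P2 P3
    -- clean contraction equations
    have F0 : v 1 * W 0 1 c d + v 2 * W 0 2 c d + v 3 * W 0 3 c d = 0 := by
      linear_combination (-1 : ℝ) * E0 + (v 0 / 2) * hanti1 0 0 c d +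
        v 1 * hanti1 1 0 c d + v 2 * hanti1 2 0 c d + v 3 * hanti1 3 0 c d
    have F1 : v 0 * W 0 1 c d - v 2 * W 1 2 c d - v 3 * W 1 3 c d = 0 := by
      linear_combination E1 - (v 1 / 2) * hanti1 1 1 c d -
        v 2 * hanti1 2 1 c d - v 3 * hanti1 3 1 c d
    have F2 : v 0 * W 0 2 c d + v 1 * W 1 2 c d - v 3 * W 2 3 c d = 0 := by
      linear_combination E2 - (v 2 / 2) * hanti1 2 2 c d - v 3 * hanti1 3 2 c d
    have F3 : v 0 * W 0 3 c d + v 1 * W 1 3 c d + v 2 * W 2 3 c d = 0 := by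
      linear_combination E3 - (v 3 / 2) * hanti1 3 3 c d
    -- anti-self-duality relations
    have G1 : W 0 1 c d + W 2 3 c d = 0 := by
      linear_combination P1 + (1/2 : ℝ) * hanti1 3 2 c d
    have G2 : W 0 2 c d - W 1 3 c d = 0 := by
      linear_combination P2 - (1/2 : ℝ) * hanti1 3 1 c d
    have G3 : W 0 3 c d + W 1 2 c d = 0 := by
      linear_combination P3 + (1/2 : ℝ) * hanti1 2 1 c d
    have hp : W 0 1 c d = 0 := by
      linear_combination v 1 * F0 + v 0 * F1 + v 3 * F2 - v 2 * F3 +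
        (v 2 * v 2 + v 3 * v 3) * G1 - (v 0 * v 3 + v 1 * v 2) * G2 -
        (v 1 * v 3 - v 0 * v 2) * G3 - W 0 1 c d * hv'
    have hq : W 0 2 c d = 0 := by
      linear_combination v 2 * F0 - v 3 * F1 + v 0 * F2 + v 1 * F3 -
        (v 1 * v 2 - v 0 * v 3) * G1 + (v 1 * v 1 + v 3 * v 3) * G2 -
        (v 2 * v 3 + v 0 * v 1) * G3 - W 0 2 c d * hv'
    have hr : W 0 3 c d = 0 := by
      linear_combination v 3 * F0 + v 2 * F1 - v 1 * F2 + v 0 * F3 -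
        (v 1 * v 3 + v 0 * v 2) * G1 + (v 0 * v 1 - v 2 * v 3) * G2 +
        (v 1 * v 1 + v 2 * v 2) * G3 - W 0 3 c d * hv'
    refine ⟨hp, hq, hr, ?_, ?_, ?_⟩
    · linear_combination G3 - hr
    · linear_combination hq - G2
    · linear_combination G1 - hp
  intro a b c d
  obtain ⟨h01, h02, h03, h12, h13, h23⟩ := key c d
  have hz : ∀ x, W x x c d = 0 := fun x => by linarith [hanti1 x x c d]
  have h10 : W 1 0 c d = 0 := by linarith [hanti1 1 0 c d]
  have h20 : W 2 0 c d = 0 := by linarith [hanti1 2 0 c d]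
  have h30 : W 3 0 c d = 0 := by linarith [hanti1 3 0 c d]
  have h21 : W 2 1 c d = 0 := by linarith [hanti1 2 1 c d]
  have h31 : W 3 1 c d = 0 := by linarith [hanti1 3 1 c d]
  have h32 : W 3 2 c d = 0 := by linarith [hanti1 3 2 c d]
  fin_cases a <;> fin_cases b <;>
    first
      | exact hz 0 | exact hz 1 | exact hz 2 | exact hz 3
      | exact h01 | exact h02 | exact h03 | exact h12 | exact h13 | exact h23
      | exact h10 | exact h20 | exact h30 | exact h21 | exact h31 | exact h32
end

section
/- Let V be a 4-dimensional real inner product space, R a symmetric bilinear form on V, S = trace of its associated self-adjoint operator, and v a nonzero vector. If B(a,b,c) = -(1/2)(R(a,c)⟨b,v⟩ - R(a,b)⟨c,v⟩) - (1/6)(R(b,v)⟨a,c⟩ - R(c,v)⟨a,b⟩) + (S/6)(⟨b,v⟩⟨a,c⟩ - ⟨c,v⟩⟨a,b⟩) vanishes, then for any a, b orthogonal to v, the restriction of R satisfies R(a,b) = ((S - R(v,v)/|v|²)/3)·⟨a,b⟩; i.e., R restricted to v^⊥ is a multiple of the inner product. -/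
open scoped RealInnerProductSpace

/-- if the Cao–Chen tensor B vanishes, then the restriction of
the symmetric bilinear form `R(x,y) = ⟪Ric x, y⟫` to `v^⊥` is the multiple
`(S - R(v,v)/|v|²)/3` of the inner product. -/
theorem stmt10
    (Ric : EuclideanSpace ℝ (Fin 4) →ₗ[ℝ] EuclideanSpace ℝ (Fin 4))
    (hsym : ∀ x y : EuclideanSpace ℝ (Fin 4), ⟪Ric x, y⟫ = ⟪x, Ric y⟫)
    (v : EuclideanSpace ℝ (Fin 4)) (hv : v ≠ 0)
    (S : ℝ) (hS : S = LinearMap.trace ℝ (EuclideanSpace ℝ (Fin 4)) Ric)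
    (hB : ∀ a b c : EuclideanSpace ℝ (Fin 4),
      -(1/2) * (⟪Ric a, c⟫ * ⟪b, v⟫ - ⟪Ric a, b⟫ * ⟪c, v⟫)
      - (1/6) * (⟪Ric b, v⟫ * ⟪a, c⟫ - ⟪Ric c, v⟫ * ⟪a, b⟫)
      + (S/6) * (⟪b, v⟫ * ⟪a, c⟫ - ⟪c, v⟫ * ⟪a, b⟫) = 0) :
    ∀ a b : EuclideanSpace ℝ (Fin 4), ⟪a, v⟫ = 0 → ⟪b, v⟫ = 0 →
      ⟪Ric a, b⟫ = ((S - ⟪Ric v, v⟫ / ‖v‖ ^ 2) / 3) * ⟪a, b⟫ := by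
  intro a b ha hb
  have h := hB a b v
  have hvv : ⟪v, v⟫ = ‖v‖ ^ 2 := real_inner_self_eq_norm_sq v
  have hn : ‖v‖ ^ 2 ≠ 0 := pow_ne_zero 2 (norm_ne_zero_iff.mpr hv)
  rw [ha, hb, hvv] at h
  set x := ⟪Ric a, b⟫ with hx
  set y := ⟪Ric v, v⟫ with hy
  set z := (⟪a, b⟫ : ℝ) with hz
  field_simp
  nlinarith [h]
end
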